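/- Let g, p be real numbers with g > 0, p > 0, and let v : ℝ → ℝ be differentiable with deriv v t = p * (v t)^2 - g for all t ≥ 0 and -Real.sqrt (g / p) < v 0 ≤ 0. Then for all t ≥ 0, -Real.sqrt (g / p) < v t. -/

import Mathlib

theorem stmt19 (g p : ℝ) (hg : g > 0) (hp : p > 0)
    (v : ℝ → ℝ) (hv : Differentiable ℝ v)
    (hdv : ∀ t ≥ (0 : ℝ), deriv v t = p * (v t) ^ 2 - g)
    (h0 : -Real.sqrt (g / p) < v 0) (h0' : v 0 ≤ 0) :
    ∀ t ≥ (0 : ℝ), -Real.sqrt (g / p) < v t := by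
  set c := Real.sqrt (g / p) with hc
  have hcsq : p * c ^ 2 = g := by
    rw [hc, Real.sq_sqrt (by positivity)]
    field_simp
  -- integrating factor exponent
  set A : ℝ → ℝ := fun t => ∫ s in (0:ℝ)..t, p * (v s - c) with hA
  have hcont : Continuous (fun s => p * (v s - c)) := by
    exact (continuous_const.mul ((hv.continuous).sub continuous_const))
  have hAderiv : ∀ t : ℝ, HasDerivAt A (p * (v t - c)) t := by
    intro t
    exact intervalIntegral.integral_hasDerivAt_right
      (hcont.intervalIntegrable 0 t) (hcont.stronglyMeasurableAtFilter _ _) hcont.continuousAt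
  set f : ℝ → ℝ := fun t => (v t + c) * Real.exp (-A t) with hf
  have hfderiv : ∀ t : ℝ, HasDerivAt f
      ((deriv v t) * Real.exp (-A t) + (v t + c) * (-(p * (v t - c)) * Real.exp (-A t))) t := by
    intro t
    have h1 : HasDerivAt (fun t => v t + c) (deriv v t) t :=
      ((hv t).hasDerivAt).add_const c
    have h2 : HasDerivAt (fun t => Real.exp (-A t)) (-(p * (v t - c)) * Real.exp (-A t)) t := by
      have := ((hAderiv t).neg).exp
      simpa [mul_comm] using this
    exact h1.mul h2
  have hfzero : ∀ t ≥ (0:ℝ), HasDerivAt f 0 t := by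
    intro t ht
    have := hfderiv t
    have hd : deriv v t = p * (v t) ^ 2 - g := hdv t ht
    have key : (deriv v t) * Real.exp (-A t) + (v t + c) * (-(p * (v t - c)) * Real.exp (-A t)) = 0 := by
      rw [hd, ← hcsq]; ring
    rwa [key] at this
  -- f is constant on [0, ∞)
  intro t ht
  have hconst : f t = f 0 := by
    have := eq_of_has_deriv_right_eq (f' := fun _ => (0:ℝ)) (a := 0) (b := t)
      (fun x hx => (hfzero x hx.1).hasDerivWithinAt)
      (fun x hx => (hasDerivAt_const x (f 0)).hasDerivWithinAt)
      (fun x hx => ((hfderiv x).continuousAt).continuousWithinAt)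
      (fun x hx => continuousWithinAt_const) rfl
    exact this t ⟨ht, le_refl t⟩
  have hA0 : A 0 = 0 := by simp [hA]
  have hf0 : f 0 = (v 0 + c) * 1 := by simp [hf, hA0]
  have hpos0 : (0:ℝ) < v 0 + c := by linarith [h0]
  have hexp : (0:ℝ) < Real.exp (-A t) := Real.exp_pos _
  have : 0 < (v t + c) * Real.exp (-A t) := by
    rw [show (v t + c) * Real.exp (-A t) = f t from rfl, hconst, hf0]
    linarith
  nlinarith [hexp, this]
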